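/- Let D be a divisor of nonnegative rank on a tropical curve Γ and P ∈ Γ. Then for every point Q ∈ Γ, f_P(Q) = max{ h(Q) : h ∈ R(D), h(P) = 0 }; that is, f_P is the pointwise maximum of all rational functions in R(D) vanishing at P. -/

import Mathlib

open scoped Classical

/-- A combinatorial model of a metric graph: a finite multigraph with positive
edge lengths. -/
structure GraphModel where
  V : Type
  E : Type
  [fintV : Fintype V]
  [fintE : Fintype E]
  src : E → V
  tgt : E → V
  len : E → ℝ
  len_pos : ∀ e, 0 < len e

attribute [instance] GraphModel.fintV GraphModel.fintE

/-- A (compact, connected) tropical curve: a compact connected metric space `Γ`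
which is the geometric realization of a finite multigraph with positive edge
lengths, equipped with the induced path metric.  Each edge `e` is realized by a
parametrization `edge e : [0, len e] → Γ` joining its endpoints, injective on the
interior, the interiors of distinct edges are disjoint and avoid the vertices,
the edges and vertices cover `Γ`, and the metric is the associated path metric. -/
structure TropicalCurve where
  Γ : Type
  [met : MetricSpace Γ]
  [cpt : CompactSpace Γ]
  [conn : ConnectedSpace Γ]
  G : GraphModel
  vtx : G.V → Γ
  edge : G.E → ℝ → Γ
  vtx_inj : Function.Injective vtx
  edge_src : ∀ e, edge e 0 = vtx (G.src e)
  edge_tgt : ∀ e, edge e (G.len e) = vtx (G.tgt e)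
  edge_inj : ∀ e, Set.InjOn (edge e) (Set.Ioo 0 (G.len e))
  interior_disjoint : ∀ e e' t t', t ∈ Set.Ioo 0 (G.len e) → t' ∈ Set.Ioo 0 (G.len e') →
    edge e t = edge e' t' → e = e' ∧ t = t'
  interior_not_vtx : ∀ e t v, t ∈ Set.Ioo 0 (G.len e) → edge e t ≠ vtx v
  cover : ∀ x : Γ, (∃ v, x = vtx v) ∨ ∃ e t, t ∈ Set.Ioo 0 (G.len e) ∧ x = edge e t
  path_metric : ∀ x y : Γ, dist x y = sInf { d : ℝ | ∃ (n : ℕ) (p : ℕ → Γ) (δ : ℕ → ℝ),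
    p 0 = x ∧ p n = y ∧ (∀ i < n, ∃ (e : G.E) (s t : ℝ), s ∈ Set.Icc 0 (G.len e) ∧
      t ∈ Set.Icc 0 (G.len e) ∧ p i = edge e s ∧ p (i+1) = edge e t ∧ δ i = |s - t|) ∧
    d = ∑ i ∈ Finset.range n, δ i }

attribute [instance] TropicalCurve.met TropicalCurve.cpt TropicalCurve.conn

namespace TropicalCurve

variable (C : TropicalCurve)

/-- A divisor on a tropical curve: a finitely supported function `Γ → ℤ`. -/
abbrev Divisor := C.Γ →₀ ℤ

/-- A divisor is effective if all its coefficients are nonnegative. -/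
def Effective (D : Divisor C) : Prop := ∀ v, 0 ≤ D v

/-- The degree of a divisor: the sum of its coefficients. -/
def deg (D : Divisor C) : ℤ := D.sum fun _ n => n

/-- `f` has (outgoing) slope `m` to the right of the point with parameter `t₀`
on the edge `e`. -/
def HasSlopeR (f : C.Γ → ℝ) (e : C.G.E) (t₀ : ℝ) (m : ℤ) : Prop :=
  ∃ ε > 0, t₀ + ε ≤ C.G.len e ∧ ∀ s ∈ Set.Icc t₀ (t₀ + ε),
    f (C.edge e s) = f (C.edge e t₀) + m * (s - t₀)

/-- `f` has (outgoing) slope `m` to the left of the point with parameter `t₀`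
on the edge `e`. -/
def HasSlopeL (f : C.Γ → ℝ) (e : C.G.E) (t₀ : ℝ) (m : ℤ) : Prop :=
  ∃ ε > 0, 0 ≤ t₀ - ε ∧ ∀ s ∈ Set.Icc (t₀ - ε) t₀,
    f (C.edge e s) = f (C.edge e t₀) + m * (t₀ - s)

/-- The branches (outgoing directions) at a point `x` of a tropical curve.  A
branch is encoded by an edge `e`, a parameter `t` with `edge e t = x`, and a
Boolean : `true` for the rightward direction, `false` for the leftward one. -/
def IsBranchAt (b : C.G.E × ℝ × Bool) (x : C.Γ) : Prop :=
  C.edge b.1 b.2.1 = x ∧ b.2.1 ∈ Set.Icc 0 (C.G.len b.1) ∧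
    (if b.2.2 then b.2.1 < C.G.len b.1 else 0 < b.2.1)

/-- `ord_f(x) = n` : the sum of the outgoing slopes of `f` over all branches
emanating from `x` equals `n`. -/
def HasOrderAt (f : C.Γ → ℝ) (x : C.Γ) (n : ℤ) : Prop :=
  ∃ (S : Finset (C.G.E × ℝ × Bool)) (m : C.G.E × ℝ × Bool → ℤ),
    (∀ b, b ∈ S ↔ C.IsBranchAt b x) ∧
    (∀ b ∈ S, if b.2.2 then C.HasSlopeR f b.1 b.2.1 (m b)
      else C.HasSlopeL f b.1 b.2.1 (m b)) ∧
    n = ∑ b ∈ S, m b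

/-- A rational function on a tropical curve: a continuous function which is
piecewise linear with integer slopes and finitely many linear pieces on every
edge. -/
def IsRational (f : C.Γ → ℝ) : Prop :=
  Continuous f ∧ ∀ e : C.G.E, ∃ (n : ℕ) (t : ℕ → ℝ), 0 < n ∧ t 0 = 0 ∧ t n = C.G.len e ∧
    (∀ i < n, t i < t (i+1)) ∧
    ∀ i < n, ∃ (m : ℤ) (b : ℝ), ∀ s ∈ Set.Icc (t i) (t (i+1)),
      f (C.edge e s) = m * s + b

/-- Two divisors are linearly equivalent if their difference is the divisor of a
rational function: `D - D' = div(f)`. -/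
def LinEquiv (D D' : Divisor C) : Prop :=
  ∃ f : C.Γ → ℝ, C.IsRational f ∧ ∀ x, C.HasOrderAt f x (D x - D' x)

/-- `f ∈ R(D)` : `f` is a rational function with `D + div(f) ≥ 0`. -/
def InR (D : Divisor C) (f : C.Γ → ℝ) : Prop :=
  C.IsRational f ∧ ∃ E : Divisor C, C.Effective E ∧ ∀ x, C.HasOrderAt f x (E x - D x)

/-- The branch `b` at `v` leaves the set `X`: some initial punctured segment
along `b` stays in `Γ ∖ (X ∖ {v})`. -/
def BranchLeaving (X : Set C.Γ) (v : C.Γ) (b : C.G.E × ℝ × Bool) : Prop :=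
  C.IsBranchAt b v ∧
    (if b.2.2 then ∃ ε > 0, b.2.1 + ε ≤ C.G.len b.1 ∧
        ∀ s ∈ Set.Ioc b.2.1 (b.2.1 + ε), C.edge b.1 s ∈ X → C.edge b.1 s = v
      else ∃ ε > 0, 0 ≤ b.2.1 - ε ∧
        ∀ s ∈ Set.Ico (b.2.1 - ε) b.2.1, C.edge b.1 s ∈ X → C.edge b.1 s = v)

/-- `deg_X^out(v)` : the number of edges (branch directions) leaving `X` at `v`,
i.e. the maximal number of internally disjoint segments in `Γ ∖ (X ∖ {v})` with
an end at `v`. -/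
noncomputable def outDeg (X : Set C.Γ) (v : C.Γ) : ℕ :=
  {b | C.BranchLeaving X v b}.ncard

/-- The degree (valence) of a point: the number of branches of `Γ` at `v`. -/
noncomputable def pointDeg (v : C.Γ) : ℕ := C.outDeg {v} v

/-- `D` is `v₀`-reduced: its coefficients away from `v₀` are nonnegative, and
every closed connected subset `X ⊆ Γ` avoiding `v₀` has a non-saturated boundary
point, i.e. some `v ∈ ∂X` with `D(v) < deg_X^out(v)`. -/
def IsReduced (v₀ : C.Γ) (D : Divisor C) : Prop :=
  (∀ v, v ≠ v₀ → 0 ≤ D v) ∧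
  ∀ X : Set C.Γ, IsClosed X → IsConnected X → v₀ ∉ X →
    ∃ v ∈ frontier X, D v < (C.outDeg X v : ℤ)

/-- `D` is linearly equivalent to an effective divisor. -/
def EquivEffective (D : Divisor C) : Prop :=
  ∃ E : Divisor C, C.Effective E ∧ C.LinEquiv D E

/-- The rank of a divisor: the largest `r ≥ -1` such that for every effective
divisor `E` of degree `r`, `D - E` is linearly equivalent to an effective
divisor (`-1` when `D` itself is not equivalent to an effective divisor). -/
noncomputable def rank (D : Divisor C) : ℤ :=
  sSup {r : ℤ | -1 ≤ r ∧ ∀ E : Divisor C, C.Effective E → C.deg E = r →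
    C.EquivEffective (D - E)}

/-- The genus of a tropical curve: its first Betti number, computed from any
model as `#E - #V + 1`. -/
noncomputable def genus : ℤ :=
  (Fintype.card C.G.E : ℤ) - (Fintype.card C.G.V : ℤ) + 1

/-- `D` is very ample: the rational functions in `R(D)` separate the points
of `Γ`. -/
def VeryAmple (D : Divisor C) : Prop :=
  ∀ P Q : C.Γ, P ≠ Q → ∃ f g : C.Γ → ℝ, C.InR D f ∧ C.InR D g ∧ f P - g P ≠ f Q - g Q

/-- `D` is ample: some positive integer multiple of `D` is very ample. -/
def Ample (D : Divisor C) : Prop := ∃ m : ℕ, 0 < m ∧ C.VeryAmple (m • D)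

end TropicalCurve

/-!
For `h ∈ R(D)` put `u = h - f_P`, so that `div u + D_P ≥ 0`. At a point `v` where `u` is
maximal every outgoing slope of `u` is `≤ 0`, and it is `≤ -1` along each branch leaving the
connected component `X` of `{u = max u}` through `v`; hence `ord_v(u) ≤ -deg_X^out(v)`. If
`P ∉ X`, reducedness yields `v ∈ ∂X` with `D_P(v) < deg_X^out(v) ≤ -ord_v(u)`, which is
impossible. So every such `u` is maximal at `P`, which gives `h ≤ f_P`. Applied to
`-(f_P + φ)` with `D + div φ ≥ 0` (which exists as `r(D) ≥ 0`), the same principle shows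
`D_P(P) ≥ 0`, i.e. `f_P ∈ R(D)`.
-/

theorem IsClosed.connectedComponentIn {X : Type*} [TopologicalSpace X] {F : Set X}
    (hF : IsClosed F) (x : X) : IsClosed (connectedComponentIn F x) := by
  by_cases hx : x ∈ F
  · exact closure_subset_iff_isClosed.mp <|
      isPreconnected_connectedComponentIn.closure.subset_connectedComponentIn
        (subset_closure (mem_connectedComponentIn hx))
        (closure_minimal (connectedComponentIn_subset F x) hF)
  · rw [connectedComponentIn_eq_empty hx]
    exact isClosed_empty

theorem exists_pos_le_le_lt {a b c : ℝ} (ha : 0 < a) (hb : 0 < b) (hc : 0 < c) :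
    ∃ δ > 0, δ ≤ a ∧ δ ≤ b ∧ δ < c :=
  ⟨min (min a b) (c / 2), lt_min (lt_min ha hb) (half_pos hc),
    (min_le_left _ _).trans (min_le_left _ _), (min_le_left _ _).trans (min_le_right _ _),
    (min_le_right _ _).trans_lt (half_lt_self hc)⟩

namespace TropicalCurve

variable {C : TropicalCurve} {f g u : C.Γ → ℝ} {e : C.G.E} {t : ℝ} {m k n : ℤ}
  {b : C.G.E × ℝ × Bool} {x v : C.Γ}

variable (C) in
def HasBranchSlope (f : C.Γ → ℝ) (b : C.G.E × ℝ × Bool) (m : ℤ) : Prop :=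
  if b.2.2 then C.HasSlopeR f b.1 b.2.1 m else C.HasSlopeL f b.1 b.2.1 m

@[simp]
theorem hasBranchSlope_true : C.HasBranchSlope f (e, t, true) m ↔ C.HasSlopeR f e t m :=
  Iff.rfl

@[simp]
theorem hasBranchSlope_false : C.HasBranchSlope f (e, t, false) m ↔ C.HasSlopeL f e t m :=
  Iff.rfl

theorem HasSlopeR.add (hf : C.HasSlopeR f e t m) (hg : C.HasSlopeR g e t k) :
    C.HasSlopeR (f + g) e t (m + k) := by
  obtain ⟨ε₁, hε₁, hl₁, h₁⟩ := hf
  obtain ⟨ε₂, hε₂, -, h₂⟩ := hg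
  refine ⟨min ε₁ ε₂, lt_min hε₁ hε₂, by linarith [min_le_left ε₁ ε₂], fun s hs => ?_⟩
  rw [Pi.add_apply, Pi.add_apply, h₁ s ⟨hs.1, by linarith [hs.2, min_le_left ε₁ ε₂]⟩,
    h₂ s ⟨hs.1, by linarith [hs.2, min_le_right ε₁ ε₂]⟩]
  push_cast
  ring

theorem HasSlopeL.add (hf : C.HasSlopeL f e t m) (hg : C.HasSlopeL g e t k) :
    C.HasSlopeL (f + g) e t (m + k) := by
  obtain ⟨ε₁, hε₁, hl₁, h₁⟩ := hf
  obtain ⟨ε₂, hε₂, -, h₂⟩ := hg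
  refine ⟨min ε₁ ε₂, lt_min hε₁ hε₂, by linarith [min_le_left ε₁ ε₂], fun s hs => ?_⟩
  rw [Pi.add_apply, Pi.add_apply, h₁ s ⟨by linarith [hs.1, min_le_left ε₁ ε₂], hs.2⟩,
    h₂ s ⟨by linarith [hs.1, min_le_right ε₁ ε₂], hs.2⟩]
  push_cast
  ring

theorem HasSlopeR.neg (hf : C.HasSlopeR f e t m) : C.HasSlopeR (-f) e t (-m) := by
  obtain ⟨ε, hε, hl, h⟩ := hf
  refine ⟨ε, hε, hl, fun s hs => ?_⟩
  rw [Pi.neg_apply, Pi.neg_apply, h s hs]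
  push_cast
  ring

theorem HasSlopeL.neg (hf : C.HasSlopeL f e t m) : C.HasSlopeL (-f) e t (-m) := by
  obtain ⟨ε, hε, hl, h⟩ := hf
  refine ⟨ε, hε, hl, fun s hs => ?_⟩
  rw [Pi.neg_apply, Pi.neg_apply, h s hs]
  push_cast
  ring

theorem HasBranchSlope.add (hf : C.HasBranchSlope f b m) (hg : C.HasBranchSlope g b k) :
    C.HasBranchSlope (f + g) b (m + k) := by
  obtain ⟨e, t, _ | _⟩ := b
  · exact (hasBranchSlope_false.1 hf).add hg
  · exact (hasBranchSlope_true.1 hf).add hg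

theorem HasBranchSlope.neg (hf : C.HasBranchSlope f b m) : C.HasBranchSlope (-f) b (-m) := by
  obtain ⟨e, t, _ | _⟩ := b
  · exact (hasBranchSlope_false.1 hf).neg
  · exact (hasBranchSlope_true.1 hf).neg

theorem HasOrderAt.add (hf : C.HasOrderAt f x n) (hg : C.HasOrderAt g x k) :
    C.HasOrderAt (f + g) x (n + k) := by
  obtain ⟨S, m, hS, hm, rfl⟩ := hf
  obtain ⟨S', m', hS', hm', rfl⟩ := hg
  obtain rfl : S' = S := Finset.ext fun b => (hS' b).trans (hS b).symm
  exact ⟨S', m + m', hS, fun b hb => HasBranchSlope.add (hm b hb) (hm' b hb),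
    Finset.sum_add_distrib.symm⟩

theorem HasOrderAt.neg (hf : C.HasOrderAt f x n) : C.HasOrderAt (-f) x (-n) := by
  obtain ⟨S, m, hS, hm, rfl⟩ := hf
  exact ⟨S, -m, hS, fun b hb => HasBranchSlope.neg (hm b hb), (Finset.sum_neg_distrib ..).symm⟩

theorem HasOrderAt.sub (hf : C.HasOrderAt f x n) (hg : C.HasOrderAt g x k) :
    C.HasOrderAt (f - g) x (n - k) := by
  simpa only [sub_eq_add_neg] using hf.add hg.neg

theorem edge_dist_le (e : C.G.E) {a b : ℝ} (ha : a ∈ Set.Icc 0 (C.G.len e))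
    (hb : b ∈ Set.Icc 0 (C.G.len e)) : dist (C.edge e a) (C.edge e b) ≤ |a - b| := by
  rw [C.path_metric]
  refine csInf_le ⟨0, ?_⟩ ⟨1, fun i => if i = 0 then C.edge e a else C.edge e b,
    fun _ => |a - b|, by simp, by simp, fun i hi => ?_, by simp⟩
  · rintro d ⟨n, p, δ, -, -, hstep, rfl⟩
    refine Finset.sum_nonneg fun i hi => ?_
    obtain ⟨_, _, _, -, -, -, -, hδ⟩ := hstep i (Finset.mem_range.mp hi)
    exact hδ ▸ abs_nonneg _
  · obtain rfl : i = 0 := by omega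
    exact ⟨e, a, b, ha, hb, by simp, by simp, rfl⟩

theorem edge_continuousOn (e : C.G.E) : ContinuousOn (C.edge e) (Set.Icc 0 (C.G.len e)) :=
  LipschitzOnWith.continuousOn (K := 1) <| lipschitzOnWith_iff_dist_le_mul.mpr
    fun a ha b hb => by simpa [Real.dist_eq] using edge_dist_le e ha hb

theorem edge_ne_edge {s : ℝ} (hs : s ∈ Set.Ioo 0 (C.G.len e)) (ht : t ∈ Set.Icc 0 (C.G.len e))
    (hst : s ≠ t) : C.edge e s ≠ C.edge e t := by
  rcases ht.1.eq_or_lt with rfl | h0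
  · rw [C.edge_src]
    exact C.interior_not_vtx e s _ hs
  rcases ht.2.lt_or_eq with hl | rfl
  · exact fun h => hst (C.edge_inj e hs ⟨h0, hl⟩ h)
  · rw [C.edge_tgt]
    exact C.interior_not_vtx e s _ hs

theorem edge_mem_connectedComponentIn {a c s : ℝ} (ha : 0 ≤ a)
    (hc : c ≤ C.G.len e) (hu : ∀ σ ∈ Set.Icc a c, u (C.edge e σ) = u (C.edge e t))
    (hs : s ∈ Set.Icc a c) (ht : t ∈ Set.Icc a c) :
    C.edge e s ∈ connectedComponentIn {x | u x = u (C.edge e t)} (C.edge e t) := by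
  have hK := isPreconnected_Icc.image _ ((edge_continuousOn e).mono (Set.Icc_subset_Icc ha hc))
  refine hK.subset_connectedComponentIn (Set.mem_image_of_mem _ ht) ?_ (Set.mem_image_of_mem _ hs)
  rintro _ ⟨σ, hσ, rfl⟩
  exact hu σ hσ

theorem HasBranchSlope.nonpos_of_le (hs : C.HasBranchSlope u b m)
    (hmax : ∀ y, u y ≤ u (C.edge b.1 b.2.1)) : m ≤ 0 := by
  obtain ⟨e, t, _ | _⟩ := b
  · obtain ⟨ε, hε, -, h⟩ := hasBranchSlope_false.1 hs
    have := h (t - ε) ⟨le_rfl, by linarith⟩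
    have := hmax (C.edge e (t - ε))
    exact_mod_cast nonpos_of_mul_nonpos_left (by linarith : (m : ℝ) * ε ≤ 0) hε
  · obtain ⟨ε, hε, -, h⟩ := hasBranchSlope_true.1 hs
    have := h (t + ε) ⟨by linarith, le_rfl⟩
    have := hmax (C.edge e (t + ε))
    exact_mod_cast nonpos_of_mul_nonpos_left (by linarith : (m : ℝ) * ε ≤ 0) hε

/-- A zero slope would keep `u` constant along an initial segment of `b`, which then lies in
the component of the level set through `v`, so `b` would not leave it. -/
theorem HasBranchSlope.ne_zero_of_branchLeaving (hs : C.HasBranchSlope u b m)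
    (hb : C.BranchLeaving (connectedComponentIn {x | u x = u v} v) v b) : m ≠ 0 := by
  rintro rfl
  obtain ⟨⟨rfl, ht, hdir⟩, hleave⟩ := hb
  obtain ⟨e, t, _ | _⟩ := b
  · simp only [Bool.false_eq_true, if_false] at hleave hdir
    obtain ⟨ε₁, hε₁, -, h₁⟩ := hleave
    obtain ⟨ε₂, hε₂, -, h₂⟩ := hasBranchSlope_false.1 hs
    obtain ⟨δ, hδ, hδ₁, hδ₂, hδt⟩ := exists_pos_le_le_lt hε₁ hε₂ hdir
    have hmem := edge_mem_connectedComponentIn (u := u) (a := t - δ) (by linarith) ht.2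
      (fun σ hσ => by simpa using h₂ σ ⟨by linarith [hσ.1], hσ.2⟩) ⟨le_rfl, by linarith⟩
      ⟨by linarith, le_rfl⟩
    exact edge_ne_edge ⟨by linarith, by linarith [ht.2]⟩ ht (by linarith)
      (h₁ (t - δ) ⟨by linarith, by linarith⟩ hmem)
  · simp only [if_true] at hleave hdir
    obtain ⟨ε₁, hε₁, -, h₁⟩ := hleave
    obtain ⟨ε₂, hε₂, -, h₂⟩ := hasBranchSlope_true.1 hs
    obtain ⟨δ, hδ, hδ₁, hδ₂, hδt⟩ := exists_pos_le_le_lt hε₁ hε₂ (sub_pos.2 hdir)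
    have hmem := edge_mem_connectedComponentIn (u := u) (c := t + δ) ht.1 (by linarith)
      (fun σ hσ => by simpa using h₂ σ ⟨hσ.1, by linarith [hσ.2]⟩) ⟨by linarith, le_rfl⟩
      ⟨le_rfl, by linarith⟩
    exact edge_ne_edge ⟨by linarith [ht.1], by linarith⟩ ht (by linarith)
      (h₁ (t + δ) ⟨by linarith, by linarith⟩ hmem)

theorem HasOrderAt.le_neg_outDeg (hord : C.HasOrderAt u v n) (hmax : ∀ y, u y ≤ u v) :
    n ≤ -(C.outDeg (connectedComponentIn {x | u x = u v} v) v : ℤ) := by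
  obtain ⟨S, m, hS, hm, rfl⟩ := hord
  set X := connectedComponentIn {x | u x = u v} v
  have hout : C.outDeg X v = (S.filter (C.BranchLeaving X v)).card := by
    rw [outDeg, ← Set.ncard_coe_finset, Finset.coe_filter]
    congr
    ext b
    exact ⟨fun h => ⟨(hS b).2 h.1, h⟩, fun h => h.2⟩
  have hslope : ∀ b ∈ S, m b ≤ 0 := fun b hb =>
    HasBranchSlope.nonpos_of_le (hm b hb) (by rwa [((hS b).1 hb).1])
  have hleave : ∀ b ∈ S.filter (C.BranchLeaving X v), m b ≤ -1 := fun b hb => by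
    obtain ⟨hbS, hbX⟩ := Finset.mem_filter.1 hb
    have := HasBranchSlope.ne_zero_of_branchLeaving (hm b hbS) hbX
    have := hslope b hbS
    omega
  have hsum₁ := Finset.sum_le_card_nsmul _ m (-1) hleave
  have hsum₂ : ∑ b ∈ S.filter (¬ C.BranchLeaving X v ·), m b ≤ 0 :=
    Finset.sum_nonpos fun b hb => hslope b (Finset.mem_filter.1 hb).1
  rw [hout, ← Finset.sum_filter_add_sum_filter_not S (C.BranchLeaving X v)]
  simp only [smul_neg, nsmul_eq_mul, mul_one] at hsum₁
  linarith

theorem HasOrderAt.nonpos_of_le (hord : C.HasOrderAt u v n) (hmax : ∀ y, u y ≤ u v) : n ≤ 0 :=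
  (hord.le_neg_outDeg hmax).trans (neg_nonpos.2 (Int.natCast_nonneg _))

section Reduced

variable {P : C.Γ} {DP E : Divisor C}

theorem IsReduced.le_of_hasOrderAt (hred : C.IsReduced P DP) (hE : C.Effective E)
    (hu : Continuous u) (hord : ∀ x, C.HasOrderAt u x (E x - DP x)) (Q : C.Γ) :
    u Q ≤ u P := by
  obtain ⟨x₀, -, hx₀⟩ := isCompact_univ.exists_isMaxOn Set.univ_nonempty hu.continuousOn
  suffices u x₀ ≤ u P from (hx₀ (Set.mem_univ Q)).trans this
  by_contra hP
  set X := connectedComponentIn {x | u x = u x₀} x₀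
  have hX : IsClosed X := (isClosed_eq hu continuous_const).connectedComponentIn x₀
  have hPX : P ∉ X := fun h => hP (connectedComponentIn_subset _ _ h).ge
  obtain ⟨v, hvX, hv⟩ := hred.2 X hX (isConnected_connectedComponentIn_iff.2 rfl) hPX
  replace hvX : v ∈ X := hX.frontier_subset hvX
  have hv₀ : u v = u x₀ := connectedComponentIn_subset {x | u x = u x₀} x₀ hvX
  have hXv : connectedComponentIn {x | u x = u v} v = X := by
    rw [hv₀]
    exact (connectedComponentIn_eq hvX).symm
  have hord_v := (hord v).le_neg_outDeg fun y => hv₀ ▸ hx₀ (Set.mem_univ y)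
  rw [hXv] at hord_v
  have := hE v
  omega

theorem IsReduced.effective (hred : C.IsReduced P DP) (hE : C.Effective E) {f : C.Γ → ℝ}
    (hf : Continuous f) (hord : ∀ x, C.HasOrderAt f x (DP x - E x)) : C.Effective DP := by
  have hneg : ∀ x, C.HasOrderAt (-f) x (E x - DP x) := fun x => by
    simpa using (hord x).neg
  intro v
  rcases eq_or_ne v P with rfl | hv
  · have := (hneg v).nonpos_of_le (hred.le_of_hasOrderAt hE hf.neg hneg)
    have := hE v
    omega
  · exact hred.1 v hv

end Reduced

theorem Effective.deg_nonneg {E : Divisor C} (hE : C.Effective E) : 0 ≤ C.deg E :=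
  Finset.sum_nonneg fun v _ => hE v

theorem equivEffective_of_rank_nonneg {D : Divisor C} (hD : 0 ≤ C.rank D) :
    C.EquivEffective D := by
  set T := {r : ℤ | -1 ≤ r ∧ ∀ E : Divisor C, C.Effective E → C.deg E = r →
    C.EquivEffective (D - E)}
  -- An unbounded `T` has junk supremum `0`, but then it has positive elements anyway.
  obtain ⟨r, ⟨-, hr⟩, hr0⟩ : ∃ r ∈ T, 0 ≤ r := by
    by_cases hb : BddAbove T
    · refine ⟨sSup T, Int.csSup_mem ⟨-1, le_rfl, fun E hE hdeg => ?_⟩ hb, hD⟩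
      have := hE.deg_nonneg
      omega
    · obtain ⟨r, hr, hr0⟩ := not_bddAbove_iff.1 hb 0
      exact ⟨r, hr, hr0.le⟩
  obtain ⟨x⟩ : Nonempty C.Γ := inferInstance
  have hx : C.Effective (Finsupp.single x r) := fun y => by
    rw [Finsupp.single_apply]
    split_ifs <;> omega
  obtain ⟨F, hF, f, hf, hford⟩ := hr _ hx (by simp [deg, Finsupp.sum_single_index])
  refine ⟨F + Finsupp.single x r, fun y => add_nonneg (hF y) (hx y), f, hf, fun y => ?_⟩
  convert hford y using 1
  simp only [Finsupp.coe_add, Finsupp.coe_sub, Pi.add_apply, Pi.sub_apply]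
  ring

end TropicalCurve

theorem fP_eq_pointwise_max_general (C : TropicalCurve)
    (D : TropicalCurve.Divisor C) (hD : 0 ≤ C.rank D) (P : C.Γ)
    (DP : TropicalCurve.Divisor C) (h₁ : C.IsReduced P DP)
    (fP : C.Γ → ℝ) (hfP : C.IsRational fP)
    (hdiv : ∀ x : C.Γ, C.HasOrderAt fP x (DP x - D x)) (hP0 : fP P = 0) :
    ∀ Q : C.Γ,
      IsGreatest {r : ℝ | ∃ h : C.Γ → ℝ, C.InR D h ∧ h P = 0 ∧ r = h Q} (fP Q) := by
  obtain ⟨E, hE, φ, hφ, hφord⟩ := TropicalCurve.equivEffective_of_rank_nonneg hD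
  have hDP : C.Effective DP := h₁.effective hE (hfP.1.add hφ.1) fun x => by
    convert (hdiv x).add (hφord x) using 1
    ring
  refine fun Q => ⟨⟨fP, ⟨hfP, DP, hDP, hdiv⟩, hP0, rfl⟩, ?_⟩
  rintro _ ⟨h, ⟨hh, Eh, hEh, hhord⟩, hhP, rfl⟩
  have hmax := h₁.le_of_hasOrderAt hEh (hh.1.sub hfP.1) (fun x => by
    convert (hhord x).sub (hdiv x) using 1
    ring) Q
  simp only [Pi.sub_apply, hhP, hP0] at hmax
  linarith

/-- Let `D` be a divisor of nonnegative rank on a tropical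
curve `Γ` and `P ∈ Γ`. Let `f_P` be the unique rational function with
`D + div(f_P) = D_P` and `f_P(P) = 0`. Then for every point `Q ∈ Γ`,
`f_P(Q) = max { h(Q) : h ∈ R(D), h(P) = 0 }`; that is, `f_P` is the pointwise
maximum of all rational functions in `R(D)` vanishing at `P`. -/
theorem fP_eq_pointwise_max (C : TropicalCurve)
    (D : TropicalCurve.Divisor C) (hD : 0 ≤ C.rank D) (P : C.Γ)
    (DP : TropicalCurve.Divisor C) (h₁ : C.IsReduced P DP) (h₂ : C.LinEquiv DP D)
    (fP : C.Γ → ℝ) (hfP : C.IsRational fP)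
    (hdiv : ∀ x : C.Γ, C.HasOrderAt fP x (DP x - D x)) (hP0 : fP P = 0) :
    ∀ Q : C.Γ,
      IsGreatest {r : ℝ | ∃ h : C.Γ → ℝ, C.InR D h ∧ h P = 0 ∧ r = h Q} (fP Q) :=
  fP_eq_pointwise_max_general C D hD P DP h₁ fP hfP hdiv hP0
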